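/- arXiv:1105.6210 — 3 statements merged into one kernel-verified Lean document; each statement's English description precedes it below -/
import Mathlib

section
/- If D₁ : Pref(𝒯_b) → Pref(𝒯_c) and D₂ : Pref(𝒯_c) → Pref(𝒯_d) are derivations, and D₁ is surjective or D₂ is total, then D₂ ∘ D₁ is a derivation from Pref(𝒯_b) to Pref(𝒯_d). -/
/-- The prefix of size `i` of a trace. -/
def prefOf {S E : Type*} (t : S × List E) (i : ℕ) : S × List E :=
  (t.1, t.2.take i)

/-- The prefix order on traces. -/
def ple {S E : Type*} (u v : S × List E) : Prop :=
  u.1 = v.1 ∧ u.2 <+: v.2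

/-- `D` is a derivation with domain `Dom` towards traces whose initial
derived states lie in `S0d`: for every `t_c` in the domain with `D t_c`
of size `n`, there is an increasing chain of `n+1` prefixes of `t_c`,
ending with `t_c`, whose images are the successive prefixes of `D t_c`
of sizes `0, …, n`, the image of the first one being an initial derived
state. -/
def IsDerivation {Sc Ec Sd Ed : Type*} (S0d : Set Sd)
    (D : Sc × List Ec → Sd × List Ed) (Dom : Set (Sc × List Ec)) : Prop :=
  ∀ tc ∈ Dom, ∃ ch : ℕ → Sc × List Ec,
    ch (D tc).2.length = tc ∧
    (∀ i j, i ≤ j → j ≤ (D tc).2.length → ple (ch i) (ch j)) ∧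
    (∀ i ≤ (D tc).2.length, ch i ∈ Dom ∧ D (ch i) = prefOf (D tc) i) ∧
    (D (ch 0)).1 ∈ S0d

/-- Composition of derivations: if `D₁` is surjective (onto the domain of
`D₂`) or `D₂` is total, then `D₂ ∘ D₁` is a derivation on the induced
domain. -/
theorem derivation_comp {Sb Eb Sc Ec Sd Ed : Type*}
    (S0c : Set Sc) (S0d : Set Sd)
    (D₁ : Sb × List Eb → Sc × List Ec) (Dom₁ : Set (Sb × List Eb))
    (D₂ : Sc × List Ec → Sd × List Ed) (Dom₂ : Set (Sc × List Ec))
    (h₁ : IsDerivation S0c D₁ Dom₁)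
    (h₂ : IsDerivation S0d D₂ Dom₂)
    (hst : (∀ tc ∈ Dom₂, ∃ tb ∈ Dom₁, D₁ tb = tc) ∨ Dom₂ = Set.univ) :
    IsDerivation S0d (D₂ ∘ D₁) (Dom₁ ∩ D₁ ⁻¹' Dom₂) := by

  intro tb htb
  obtain ⟨htb1, htb2⟩ := htb
  obtain ⟨ch₂, hc2n, hc2mono, hc2mem, hc20⟩ := h₂ (D₁ tb) htb2
  obtain ⟨ch₁, hc1n, hc1mono, hc1mem, _⟩ := h₁ tb htb1
  have hcomp : (D₂ ∘ D₁) tb = D₂ (D₁ tb) := rfl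
  set n := (D₂ (D₁ tb)).2.length with hn
  set L := (D₁ tb).2.length with hL
  have hple : ∀ i ≤ n, ple (ch₂ i) (D₁ tb) := by
    intro i hi
    have := hc2mono i n hi le_rfl
    rwa [hc2n] at this
  have hmle : ∀ i ≤ n, (ch₂ i).2.length ≤ L := fun i hi => (hple i hi).2.length_le
  have heq : ∀ i ≤ n, D₁ (ch₁ ((ch₂ i).2.length)) = ch₂ i := by
    intro i hi
    have h := (hc1mem ((ch₂ i).2.length) (hmle i hi)).2
    obtain ⟨hs, hl⟩ := hple i hi
    rw [h]
    unfold prefOf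
    rw [← List.prefix_iff_eq_take.mp hl, ← hs]
  refine ⟨fun i => ch₁ ((ch₂ i).2.length), ?_, ?_, ?_, ?_⟩
  · show ch₁ ((ch₂ n).2.length) = tb
    rw [hc2n]
    exact hc1n
  · intro i j hij hj
    exact hc1mono _ _ (hc2mono i j hij hj).2.length_le (hmle j hj)
  · intro i hi
    refine ⟨⟨(hc1mem _ (hmle i hi)).1, ?_⟩, ?_⟩
    · show D₁ (ch₁ ((ch₂ i).2.length)) ∈ Dom₂
      rw [heq i hi]
      exact (hc2mem i hi).1
    · show D₂ (D₁ (ch₁ ((ch₂ i).2.length))) = prefOf (D₂ (D₁ tb)) i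
      rw [heq i hi]
      exact (hc2mem i hi).2
  · show (D₂ (D₁ (ch₁ ((ch₂ 0).2.length)))).1 ∈ S0d
    rw [heq 0 (Nat.zero_le n)]
    exact hc20
end

section
/- A parametric subtrace is a derived trace: if 𝒯' is a parametric subtrace of 𝒯 (obtained by restricting states to a subset of independent parameters S' and actions to the subset R' of action types acting only on those parameters), then the projection map sending each prefix of 𝒯 to the prefix of 𝒯' obtained by restricting states to S' and deleting events whose action type is not in R' is a surjective derivation, so Drv(𝒯, 𝒯') holds. -/
open Classical in
/-- `IsRun T s evs` : starting from state `s`, the list of events `evs`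
(each event a pair of an action type and the state reached) follows the
transition function `T`. -/
def IsRun {P V R : Type*} (T : R → (P → V) → (P → V)) :
    (P → V) → List (R × (P → V)) → Prop
  | _, [] => True
  | s, (r, s') :: rest => T r s = s' ∧ IsRun T s' rest

/-- Traces (prefixes) of the transition system `⟨S, R, T, S₀⟩`. -/
def Traces {P V R : Type*} (T : R → (P → V) → (P → V)) (S0 : Set (P → V)) :
    Set ((P → V) × List (R × (P → V))) :=
  {t | t.1 ∈ S0 ∧ IsRun T t.1 t.2}

/-- Runs of the restricted system, whose events all carry action types in `R'`. -/
def IsRun' {P V R : Type*} (P' : Set P) (R' : Set R)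
    (T' : R → (↥P' → V) → (↥P' → V)) :
    (↥P' → V) → List (R × (↥P' → V)) → Prop
  | _, [] => True
  | s, (r, s') :: rest => r ∈ R' ∧ T' r s = s' ∧ IsRun' P' R' T' s' rest

/-- Traces of the restricted system. -/
def Traces' {P V R : Type*} (P' : Set P) (R' : Set R)
    (T' : R → (↥P' → V) → (↥P' → V)) (S0' : Set (↥P' → V)) :
    Set ((↥P' → V) × List (R × (↥P' → V))) :=
  {t | t.1 ∈ S0' ∧ IsRun' P' R' T' t.1 t.2}

/-- Restriction of a state to the parameters in `P'`. -/
def projState {P V : Type*} (P' : Set P) (s : P → V) : ↥P' → V :=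
  fun p => s p.1

open Classical in
/-- Projection of a trace: restrict all states to `P'` and delete the
events whose action type is not in `R'`. -/
noncomputable def projTrace {P V R : Type*} (P' : Set P) (R' : Set R)
    (t : (P → V) × List (R × (P → V))) :
    (↥P' → V) × List (R × (↥P' → V)) :=
  (projState P' t.1,
    (t.2.filter fun e => decide (e.1 ∈ R')).map fun e => (e.1, projState P' e.2))

/-! The derivation sends the `i`-th prefix of the projected trace back to the longest prefix of
the original trace whose projection has `i` events; these prefixes grow with `i`, and the last
one is the whole trace. For surjectivity, a run of the restricted system lifts to a run of the
full system by replaying its actions with `T`: actions in `R'` act on the `P'`-part through `T'`,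
so the lift projects back onto the run. -/

namespace List

variable {α : Type*} (p : α → Bool)

/-- The length of the longest prefix of a list that contains at most `i` elements satisfying
`p`. -/
def longestPrefixLen : List α → ℕ → ℕ
  | [], _ => 0
  | a :: l, 0 => if p a then 0 else longestPrefixLen l 0 + 1
  | a :: l, i + 1 => if p a then longestPrefixLen l i + 1 else longestPrefixLen l (i + 1) + 1

theorem filter_take_longestPrefixLen (l : List α) (i : ℕ) :
    (l.take (l.longestPrefixLen p i)).filter p = (l.filter p).take i := by
  induction l generalizing i with
  | nil => simp [longestPrefixLen]
  | cons a l ih =>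
    cases i <;> by_cases ha : p a <;> simp [longestPrefixLen, ha, ih]

theorem longestPrefixLen_of_length_filter_le {l : List α} {i : ℕ}
    (h : (l.filter p).length ≤ i) : l.longestPrefixLen p i = l.length := by
  induction l generalizing i with
  | nil => simp [longestPrefixLen]
  | cons a l ih =>
    cases i <;> by_cases ha : p a <;> simp_all [longestPrefixLen]

theorem monotone_longestPrefixLen (l : List α) : Monotone (l.longestPrefixLen p) := by
  induction l with
  | nil => simp [Monotone, longestPrefixLen]
  | cons a l ih =>
    intro i j hij
    rcases i with _ | i <;> rcases j with _ | j
    · rfl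
    · by_cases ha : p a <;> simp [longestPrefixLen, ha, ih (Nat.zero_le _)]
    · omega
    · have hij' : i ≤ j := Nat.succ_le_succ_iff.mp hij
      by_cases ha : p a <;> simp [longestPrefixLen, ha, ih hij', ih hij]

end List

section Projection

variable {P V R : Type*} (P' : Set P) (R' : Set R)

open Classical in
theorem projTrace_take_longestPrefixLen (s : P → V) (l : List (R × (P → V))) (i : ℕ) :
    projTrace P' R' (s, l.take (l.longestPrefixLen (fun e => decide (e.1 ∈ R')) i)) =
      prefOf (projTrace P' R' (s, l)) i := by
  simp only [projTrace, prefOf, List.filter_take_longestPrefixLen, List.map_take]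

theorem IsRun.take {T : R → (P → V) → (P → V)} {s : P → V} {l : List (R × (P → V))}
    (h : IsRun T s l) (n : ℕ) : IsRun T s (l.take n) := by
  induction l generalizing s n with
  | nil => simp [IsRun]
  | cons e l ih =>
    rcases n with _ | n
    · trivial
    · exact ⟨h.1, ih h.2 n⟩

open Classical in
theorem isDerivation_projTrace (T : R → (P → V) → (P → V)) (S0 : Set (P → V)) :
    IsDerivation (projState P' '' S0) (projTrace P' R') (Traces T S0) := by
  rintro ⟨s, l⟩ ⟨hs, hrun⟩
  have hlen : (projTrace P' R' (s, l)).2.length = (l.filter fun e => decide (e.1 ∈ R')).length :=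
    List.length_map _
  refine ⟨fun i => (s, l.take (l.longestPrefixLen (fun e => decide (e.1 ∈ R')) i)), ?_,
    fun i j hij _ => ⟨rfl, ?_⟩,
    fun i _ => ⟨⟨hs, hrun.take _⟩, projTrace_take_longestPrefixLen P' R' s l i⟩, ⟨s, hs, rfl⟩⟩
  · dsimp only
    rw [hlen, List.longestPrefixLen_of_length_filter_le _ le_rfl, List.take_length]
  · exact List.take_prefix_take_left (List.monotone_longestPrefixLen _ l hij)

open Classical in
theorem projTrace_snd_cons (s s' : P → V) (r : R) (l : List (R × (P → V))) :
    (projTrace P' R' (s, (r, s') :: l)).2 =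
      if r ∈ R' then (r, projState P' s') :: (projTrace P' R' (s', l)).2
      else (projTrace P' R' (s', l)).2 := by
  by_cases hr : r ∈ R' <;> simp [projTrace, hr]

variable {T : R → (P → V) → (P → V)} {T' : R → (↥P' → V) → (↥P' → V)}

theorem IsRun.isRun'_projTrace
    (hR' : ∀ r ∈ R', ∀ s : P → V, projState P' (T r s) = T' r (projState P' s))
    (hRout : ∀ r ∉ R', ∀ s : P → V, projState P' (T r s) = projState P' s)
    {s : P → V} {l : List (R × (P → V))} (h : IsRun T s l) :
    IsRun' P' R' T' (projState P' s) (projTrace P' R' (s, l)).2 := by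
  induction l generalizing s with
  | nil => trivial
  | cons e l ih =>
    obtain ⟨r, s'⟩ := e
    obtain ⟨rfl, hrun⟩ := h
    rw [projTrace_snd_cons]
    by_cases hr : r ∈ R'
    · rw [if_pos hr]
      exact ⟨hr, (hR' r hr s).symm, ih hrun⟩
    · rw [if_neg hr, ← hRout r hr s]
      exact ih hrun

def liftRun (T : R → (P → V) → (P → V)) {S' : Type*} :
    (P → V) → List (R × S') → List (R × (P → V))
  | _, [] => []
  | s, (r, _) :: l => (r, T r s) :: liftRun T (T r s) l

theorem isRun_liftRun {S' : Type*} (s : P → V) (l : List (R × S')) :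
    IsRun T s (liftRun T s l) := by
  induction l generalizing s with
  | nil => trivial
  | cons e l ih => exact ⟨rfl, ih _⟩

theorem projTrace_liftRun
    (hR' : ∀ r ∈ R', ∀ s : P → V, projState P' (T r s) = T' r (projState P' s))
    {s : P → V} {l : List (R × (↥P' → V))} (h : IsRun' P' R' T' (projState P' s) l) :
    (projTrace P' R' (s, liftRun T s l)).2 = l := by
  induction l generalizing s with
  | nil => rfl
  | cons e l ih =>
    obtain ⟨r, u⟩ := e
    obtain ⟨hr, rfl, hrun⟩ := h
    rw [liftRun, projTrace_snd_cons, if_pos hr, ih (by rwa [hR' r hr s]), hR' r hr s]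

end Projection

/-- A parametric subtrace is a derived trace: the projection map is a
surjective derivation from the traces of `⟨S, R, T, S₀⟩` onto the traces
of the restricted system `⟨S', R', T', S₀'⟩`. -/
theorem parametric_subtrace_is_derived {P V R : Type*}
    (T : R → (P → V) → (P → V)) (S0 : Set (P → V))
    (P' : Set P) (R' : Set R)
    (T' : R → (↥P' → V) → (↥P' → V))
    -- actions in R' use only parameters of P' : the P'-part of the
    -- successor state is computed from the P'-part of the current state
    (hR' : ∀ r ∈ R', ∀ s : P → V, projState P' (T r s) = T' r (projState P' s))
    -- no action outside R' modifies a parameter of P'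
    (hRout : ∀ r ∉ R', ∀ s : P → V, projState P' (T r s) = projState P' s) :
    IsDerivation (projState P' '' S0) (projTrace P' R')
      (Traces T S0) ∧
    (∀ t ∈ Traces T S0, projTrace P' R' t ∈ Traces' P' R' T' (projState P' '' S0)) ∧
    (∀ t' ∈ Traces' P' R' T' (projState P' '' S0),
      ∃ t ∈ Traces T S0, projTrace P' R' t = t') := by
  refine ⟨isDerivation_projTrace P' R' T S0, ?_, ?_⟩
  · rintro ⟨s, l⟩ ⟨hs, hrun⟩
    exact ⟨Set.mem_image_of_mem _ hs, hrun.isRun'_projTrace P' R' hR' hRout⟩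
  · rintro ⟨_, l⟩ ⟨⟨s, hs, rfl⟩, hrun⟩
    exact ⟨(s, liftRun T s l), ⟨hs, isRun_liftRun s l⟩,
      Prod.ext rfl (projTrace_liftRun P' R' hR' hrun)⟩
end

section
/- Given the simulation map d from PaLM states to GenTra4CP states defined by the identity on the parameters 𝒩, Σ, ν, 𝒱, 𝒞, 𝒟, A, R, S_c and by S_e := Q_h ∪ Q_t, each PaLM transition rule (with explanations ignored) induces the corresponding GenTra4CP transition: e.g., for the reduce rule, if the PaLM transition updates (𝒟(v), Q_t) to (𝒟(v) − Δ, Q_t ∪ ā) with A = {(c,a)} and R = ∅, then the GenTra4CP reduce transition holds between d-images of the states, i.e., 𝒟(v) becomes 𝒟(v) − Δ, S_e becomes S_e ∪ ā, and A becomes A − {(c,a)} composed with the subsequent state of A. -/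
/-- A (simplified) PaLM solver state: parameters 𝒩, ν, 𝒱, 𝒞, 𝒟, A, R, S_c
together with the event queue split into head `Qh` and tail `Qt`
(explanations ℰ are ignored). -/
structure PState (Node Var Val C Ev : Type*) where
  nodes : Set Node            -- 𝒩
  curr : Node                 -- ν
  vars : Set Var              -- 𝒱
  cons : Set C                -- 𝒞
  dom : Var → Set Val         -- 𝒟
  A : Set (C × Ev)
  R : Set C
  Sc : Set C
  Qh : Set Ev
  Qt : Set Ev

/-- A (simplified) GenTra4CP solver state. -/
structure GState (Node Var Val C Ev : Type*) where
  nodes : Set Node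
  curr : Node
  vars : Set Var
  cons : Set C
  dom : Var → Set Val
  A : Set (C × Ev)
  E : Set C
  R : Set C
  Sc : Set C
  Se : Set Ev

/-- The simulation map: identity on 𝒩, ν, 𝒱, 𝒞, 𝒟, A, R, S_c and
`S_e := Q_h ∪ Q_t` (the solved set `E` is empty in PaLM). -/
def dmap {Node Var Val C Ev : Type*} (s : PState Node Var Val C Ev) :
    GState Node Var Val C Ev :=
  { nodes := s.nodes, curr := s.curr, vars := s.vars, cons := s.cons,
    dom := s.dom, A := s.A, E := ∅, R := s.R, Sc := s.Sc,
    Se := s.Qh ∪ s.Qt }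

variable {Node Var Val C Ev : Type*} [DecidableEq Var]

/-- The PaLM `reduce` transition (explanations ignored): requires
`A = {(c,a)}`, `R = ∅`, removes the nonempty set `Δ` from `𝒟(v)`, adds the
generated events `ā` to `Q_t`, and consumes `(c,a)` from `A`; the other
parameters are unchanged. -/
def PalmReduce (s s' : PState Node Var Val C Ev)
    (c : C) (a : Ev) (v : Var) (Δ : Set Val) (abar : Set Ev)
    (varsOf : C → Set Var) : Prop :=
  s.A = {(c, a)} ∧ s.R = ∅ ∧ v ∈ varsOf c ∧ Δ ≠ ∅ ∧ Δ ⊆ s.dom v ∧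
  s'.dom = Function.update s.dom v (s.dom v \ Δ) ∧
  s'.Qt = s.Qt ∪ abar ∧ s'.Qh = s.Qh ∧
  s'.A = s.A \ {(c, a)} ∧
  s'.nodes = s.nodes ∧ s'.curr = s.curr ∧ s'.vars = s.vars ∧
  s'.cons = s.cons ∧ s'.R = s.R ∧ s'.Sc = s.Sc

/-- The GenTra4CP `reduce` transition: preconditions `(c,a) ∈ A`,
`v ∈ Var(c)` and (property (G3)) `R = ∅`; effects `𝒟'(v) = 𝒟(v) − Δ`,
`S_e' = S_e ∪ ā`, `A' = A − {(c,a)}`; other parameters unchanged. -/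
def GenTraReduce (g g' : GState Node Var Val C Ev)
    (c : C) (a : Ev) (v : Var) (Δ : Set Val) (abar : Set Ev)
    (varsOf : C → Set Var) : Prop :=
  (c, a) ∈ g.A ∧ g.R = ∅ ∧ v ∈ varsOf c ∧
  g'.dom = Function.update g.dom v (g.dom v \ Δ) ∧
  g'.Se = g.Se ∪ abar ∧
  g'.A = g.A \ {(c, a)} ∧
  g'.nodes = g.nodes ∧ g'.curr = g.curr ∧ g'.vars = g.vars ∧
  g'.cons = g.cons ∧ g'.R = g.R ∧ g'.Sc = g.Sc ∧ g'.E = g.E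

/-- Each PaLM `reduce` transition induces the corresponding GenTra4CP
`reduce` transition between the `d`-images of the states. -/
theorem palm_reduce_simulates_gentra_reduce
    (s s' : PState Node Var Val C Ev)
    (c : C) (a : Ev) (v : Var) (Δ : Set Val) (abar : Set Ev)
    (varsOf : C → Set Var)
    (h : PalmReduce s s' c a v Δ abar varsOf) :
    GenTraReduce (dmap s) (dmap s') c a v Δ abar varsOf := by
  obtain ⟨hA, hR, hv, _, _, hd, hQt, hQh, hA', hn, hcu, hva, hco, hR', hSc⟩ := h
  refine ⟨by simp [dmap, hA], hR, hv, hd, ?_, hA', hn, hcu, hva, hco, hR', hSc, rfl⟩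
  simp [dmap, hQt, hQh, Set.union_assoc]
end
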